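/- arXiv:1809.01370 — 4 statements merged into one kernel-verified Lean document; each statement's English description precedes it below -/
import Mathlib

section
/- Let A be a real symmetric d×d matrix, let u ∈ ℝ^d be an eigenvector of A with Au = a·u for some a > 0, and let n ∈ ℕ. Define γ : [0,1] → ℝ^d by γ(t) = sin((π/2 + nπ) t) · u. Then for every t ∈ [0,1], −∫_0^t ∫_1^s A γ(r) dr ds = λ · γ(t), where λ = 4a / (π² (1 + 2n)²). That is, γ is an eigenfunction with eigenvalue λ of the integral operator L defined by L(γ)(t) = −∫_0^t ∫_1^s A γ(r) dr ds. -/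
open Real Matrix intervalIntegral

/-- Let `A` be a real symmetric `d × d` matrix, `u` an eigenvector with
`A u = a u`, `a > 0`, and `n ∈ ℕ`. With `γ(t) = sin((π/2 + nπ) t) • u`, for every `t ∈ [0,1]`,
`−∫_0^t ∫_1^s A γ(r) dr ds = λ • γ(t)` where `λ = 4a / (π² (1 + 2n)²)`: `γ` is an eigenfunction
of the integral operator `L` with eigenvalue `λ`. -/
theorem statement6 (d : ℕ) (A : Matrix (Fin d) (Fin d) ℝ) (hA : A.IsSymm)
    (u : Fin d → ℝ) (hu : u ≠ 0) (a : ℝ) (ha : 0 < a) (heig : A.mulVec u = a • u)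
    (n : ℕ) (γ : ℝ → Fin d → ℝ)
    (hγ : ∀ t : ℝ, γ t = Real.sin ((π / 2 + n * π) * t) • u) :
    ∀ t ∈ Set.Icc (0:ℝ) 1,
      -(∫ s in (0:ℝ)..t, ∫ r in (1:ℝ)..s, A.mulVec (γ r))
        = (4 * a / (π ^ 2 * (1 + 2 * (n : ℝ)) ^ 2)) • γ t := by
  intro t _
  set ω : ℝ := π / 2 + n * π with hωdef
  have hπ : (0:ℝ) < π := Real.pi_pos
  have hωpos : 0 < ω := by positivity
  have hω : ω ≠ 0 := ne_of_gt hωpos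
  have hγ' : ∀ r : ℝ, A.mulVec (γ r) = Real.sin (ω * r) • (a • u) := by
    intro r
    rw [hγ, Matrix.mulVec_smul, heig]
  have hcos1 : Real.cos (ω * 1) = 0 := by
    rw [mul_one, hωdef, Real.cos_add]
    simp [Real.sin_nat_mul_pi]
  have hinner : ∀ s : ℝ, (∫ r in (1:ℝ)..s, A.mulVec (γ r))
      = ((- Real.cos (ω * s)) / ω) • (a • u) := by
    intro s
    simp_rw [hγ']
    rw [intervalIntegral.integral_smul_const]
    congr 1
    rw [intervalIntegral.integral_comp_mul_left Real.sin hω, integral_sin, hcos1]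
    field_simp
    rw [smul_eq_mul, ← mul_assoc, mul_one_div_cancel hω, one_mul, zero_sub]
  simp_rw [hinner]
  rw [intervalIntegral.integral_smul_const]
  have : (∫ s in (0:ℝ)..t, (- Real.cos (ω * s)) / ω)
      = - (Real.sin (ω * t) / ω ^ 2) := by
    have : ∀ s : ℝ, (- Real.cos (ω * s)) / ω = (-ω⁻¹) * Real.cos (ω * s) := by
      intro s; field_simp
    simp_rw [this]
    rw [intervalIntegral.integral_const_mul,
      intervalIntegral.integral_comp_mul_left Real.cos hω, integral_cos]
    simp only [smul_eq_mul, mul_zero, Real.sin_zero, sub_zero]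
    field_simp
  rw [this, hγ t]
  have hωsq : ω ^ 2 = π ^ 2 * (1 + 2 * (n : ℝ)) ^ 2 / 4 := by
    rw [hωdef]; ring
  have h1 : π ^ 2 * (1 + 2 * (n : ℝ)) ^ 2 ≠ 0 := by positivity
  rw [smul_smul, smul_smul, ← neg_smul]
  congr 1
  rw [hωsq]
  field_simp
end

section
/- Let h₁, k₁, h₂, k₂ ∈ ℝ and let M be the 2×2 real matrix with rows (h₁, k₁) and (h₂, k₂). For φ ∈ L²([0,1]; ℝ²) define B(φ) = ∫_0^1 φ(t) · (M ∫_0^t φ(s) ds) dt. Then: (i) B((1,0)) = h₁/2 and B((0,1)) = k₂/2, where (1,0) and (0,1) denote the corresponding constant functions on [0,1]; (ii) for every integer n ≥ 1, B(√2(cos(2πnt), 0)) = B(√2(sin(2πnt), 0)) = B(√2(0, cos(2πnt))) = B(√2(0, sin(2πnt))) = 0. Consequently, for the orthonormal basis {ψ_i} of L²([0,1]; ℝ²) consisting of these functions, the series Σ_i B(ψ_i) converges to (h₁ + k₂)/2, i.e. to one half of the divergence ∇·α of the linear vector field α(x,y) = (h₁x + k₁y, h₂x + k₂y). -/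
/-!
For `φ = f • v` with a fixed vector `v`, the inner integral is `F t • v` with `F` the
primitive of `f`, so `B φ = (v ⬝ᵥ M *ᵥ v) ∫₀¹ f F = (v ⬝ᵥ M *ᵥ v) F(1)² / 2`. For a
coordinate vector `v` this picks out a diagonal entry of `M`, and `F(1) = 0` for every
trigonometric mode, so only the two constant basis functions contribute to the series.
-/

open MeasureTheory Real Matrix intervalIntegral

theorem integral_mul_primitive_eq_sq_div_two {f : ℝ → ℝ} (hf : Continuous f) (a b : ℝ) :
    ∫ t in a..b, f t * ∫ s in a..t, f s = (∫ t in a..b, f t) ^ 2 / 2 := by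
  have hF : ∀ t, HasDerivAt (fun t => ∫ s in a..t, f s) (f t) t := fun t =>
    integral_hasDerivAt_right (hf.intervalIntegrable a t) (hf.stronglyMeasurableAtFilter _ _)
      hf.continuousAt
  have hFc : Continuous fun t => ∫ s in a..t, f s :=
    continuous_primitive (fun _ _ => hf.intervalIntegrable _ _) a
  rw [integral_eq_sub_of_hasDerivAt (f := fun t => (∫ s in a..t, f s) ^ 2 / 2)
    (f' := fun t => f t * ∫ s in a..t, f s)
    (fun t _ => (((hF t).pow 2).div_const 2).congr_deriv (by push_cast; ring))
    ((hf.mul hFc).intervalIntegrable a b)]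
  simp

section
variable {ι : Type*} [Fintype ι]

theorem integral_smul_dotProduct_mulVec_primitive (M : Matrix ι ι ℝ) (v : ι → ℝ)
    {f : ℝ → ℝ} (hf : Continuous f) (a b : ℝ) :
    ∫ t in a..b, (f t • v) ⬝ᵥ M *ᵥ ∫ s in a..t, f s • v
      = (v ⬝ᵥ M *ᵥ v) * (∫ t in a..b, f t) ^ 2 / 2 := by
  simp only [intervalIntegral.integral_smul_const, mulVec_smul, smul_dotProduct, dotProduct_smul,
    smul_eq_mul]
  rw [mul_div_assoc, ← integral_mul_primitive_eq_sq_div_two hf,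
    ← intervalIntegral.integral_const_mul]
  congr 1 with t
  ring

end

theorem integral_cos_two_pi_int_mul {n : ℤ} (hn : n ≠ 0) :
    ∫ t in (0:ℝ)..1, cos (2 * π * n * t) = 0 := by
  have hc : 2 * π * n ≠ 0 := by simp [hn, pi_ne_zero]
  rw [integral_comp_mul_left (fun x => cos x) hc, integral_cos, mul_one,
    show 2 * π * n = (2 * n : ℤ) * π by push_cast; ring, sin_int_mul_pi]
  simp

theorem integral_sin_two_pi_int_mul (n : ℤ) :
    ∫ t in (0:ℝ)..1, sin (2 * π * n * t) = 0 := by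
  rcases eq_or_ne n 0 with rfl | hn
  · simp
  have hc : 2 * π * n ≠ 0 := by simp [hn, pi_ne_zero]
  rw [integral_comp_mul_left (fun x => sin x) hc, integral_sin, mul_one,
    show 2 * π * n = n * (2 * π) by ring, cos_int_mul_two_pi]
  simp

section
variable {R : Type*} [MulZeroOneClass R]

theorem vec2_zero_right_eq_smul (x : R) : ![x, 0] = x • ![1, 0] := by
  ext i; fin_cases i <;> simp

theorem vec2_zero_left_eq_smul (x : R) : ![0, x] = x • ![0, 1] := by
  ext i; fin_cases i <;> simp

end

/-- With `M = !![h₁, k₁; h₂, k₂]` and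
`B(φ) = ∫_0^1 φ(t) · (M ∫_0^t φ(s) ds) dt` on `L²([0,1]; ℝ²)`: (i) `B((1,0)) = h₁/2` and
`B((0,1)) = k₂/2`; (ii) for every `n ≥ 1`, `B` vanishes on the normalized trigonometric
functions `√2(cos 2πnt, 0)`, `√2(sin 2πnt, 0)`, `√2(0, cos 2πnt)`, `√2(0, sin 2πnt)`;
consequently for the orthonormal basis `{ψ_i}` consisting of these functions the series
`Σ_i B(ψ_i)` converges to `(h₁ + k₂)/2`, one half of the divergence of the linear vector field
`α(x,y) = (h₁x + k₁y, h₂x + k₂y)`. -/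
theorem statement8 (h₁ k₁ h₂ k₂ : ℝ)
    (M : Matrix (Fin 2) (Fin 2) ℝ) (hM : M = !![h₁, k₁; h₂, k₂])
    (B : (ℝ → Fin 2 → ℝ) → ℝ)
    (hB : ∀ φ : ℝ → Fin 2 → ℝ,
      B φ = ∫ t in (0:ℝ)..1, φ t ⬝ᵥ M.mulVec (∫ s in (0:ℝ)..t, φ s))
    (ψ : (Fin 2 ⊕ ℕ × Fin 4) → ℝ → Fin 2 → ℝ)
    (hψ0 : ψ (Sum.inl 0) = fun _ => ![1, 0])
    (hψ1 : ψ (Sum.inl 1) = fun _ => ![0, 1])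
    (hψa : ∀ n : ℕ, ψ (Sum.inr (n, 0))
      = fun t => ![Real.sqrt 2 * Real.cos (2 * π * ((n : ℝ) + 1) * t), 0])
    (hψb : ∀ n : ℕ, ψ (Sum.inr (n, 1))
      = fun t => ![Real.sqrt 2 * Real.sin (2 * π * ((n : ℝ) + 1) * t), 0])
    (hψc : ∀ n : ℕ, ψ (Sum.inr (n, 2))
      = fun t => ![0, Real.sqrt 2 * Real.cos (2 * π * ((n : ℝ) + 1) * t)])
    (hψd : ∀ n : ℕ, ψ (Sum.inr (n, 3))
      = fun t => ![0, Real.sqrt 2 * Real.sin (2 * π * ((n : ℝ) + 1) * t)]) :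
    B (fun _ => ![1, 0]) = h₁ / 2 ∧
    B (fun _ => ![0, 1]) = k₂ / 2 ∧
    (∀ n : ℕ, 1 ≤ n →
      B (fun t => ![Real.sqrt 2 * Real.cos (2 * π * (n : ℝ) * t), 0]) = 0 ∧
      B (fun t => ![Real.sqrt 2 * Real.sin (2 * π * (n : ℝ) * t), 0]) = 0 ∧
      B (fun t => ![0, Real.sqrt 2 * Real.cos (2 * π * (n : ℝ) * t)]) = 0 ∧
      B (fun t => ![0, Real.sqrt 2 * Real.sin (2 * π * (n : ℝ) * t)]) = 0) ∧
    HasSum (fun i => B (ψ i)) ((h₁ + k₂) / 2) := by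
  subst hM
  have hB₁ : ∀ f : ℝ → ℝ, Continuous f →
      B (fun t => ![f t, 0]) = h₁ * (∫ t in (0:ℝ)..1, f t) ^ 2 / 2 := fun f hf => by
    rw [funext fun t => vec2_zero_right_eq_smul (f t), hB,
      integral_smul_dotProduct_mulVec_primitive _ _ hf]
    simp [mulVec, dotProduct]
  have hB₂ : ∀ f : ℝ → ℝ, Continuous f →
      B (fun t => ![0, f t]) = k₂ * (∫ t in (0:ℝ)..1, f t) ^ 2 / 2 := fun f hf => by
    rw [funext fun t => vec2_zero_left_eq_smul (f t), hB,
      integral_smul_dotProduct_mulVec_primitive _ _ hf]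
    simp [mulVec, dotProduct]
  have htrig : ∀ n : ℕ, 1 ≤ n →
      B (fun t => ![√2 * cos (2 * π * n * t), 0]) = 0 ∧
      B (fun t => ![√2 * sin (2 * π * n * t), 0]) = 0 ∧
      B (fun t => ![0, √2 * cos (2 * π * n * t)]) = 0 ∧
      B (fun t => ![0, √2 * sin (2 * π * n * t)]) = 0 := fun n hn => by
    have hcos := integral_cos_two_pi_int_mul (n := n) (by omega)
    have hsin := integral_sin_two_pi_int_mul n
    push_cast at hcos hsin
    refine ⟨(hB₁ _ ?_).trans ?_, (hB₁ _ ?_).trans ?_,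
      (hB₂ _ ?_).trans ?_, (hB₂ _ ?_).trans ?_⟩ <;> first | fun_prop | simp [hcos, hsin]
  have hconst₁ : B (fun _ => ![1, 0]) = h₁ / 2 := by
    simpa using hB₁ (fun _ => 1) continuous_const
  have hconst₂ : B (fun _ => ![0, 1]) = k₂ / 2 := by
    simpa using hB₂ (fun _ => 1) continuous_const
  refine ⟨hconst₁, hconst₂, htrig, ?_⟩
  have htrig_basis : ∀ p : ℕ × Fin 4, B (ψ (Sum.inr p)) = 0 := by
    rintro ⟨n, j⟩
    obtain ⟨h0, h1, h2, h3⟩ := htrig (n + 1) (by omega)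
    push_cast at h0 h1 h2 h3
    fin_cases j
    exacts [hψa n ▸ h0, hψb n ▸ h1, hψc n ▸ h2, hψd n ▸ h3]
  have hconst : HasSum (fun i => B (ψ (Sum.inl i))) (h₁ / 2 + k₂ / 2) := by
    simpa [hψ0, hψ1, hconst₁, hconst₂] using hasSum_fintype fun i => B (ψ (Sum.inl i))
  simpa [add_div] using hconst.sum (f := fun i => B (ψ i)) (hasSum_zero.congr_fun htrig_basis)
end

section
/- Let h₁, k₁, h₂, k₂ ∈ ℝ and let M be the 2×2 real matrix with rows (h₁, k₁) and (h₂, k₂). For φ ∈ L²([0,1]; ℝ²) define B(φ) = ∫_0^1 φ(t) · (M ∫_0^t φ(s) ds) dt. Then for every integer n ≥ 1: B((cos(2πnt), sin(2πnt))) = (h₂ − k₁)/(4πn); B((sin(2πnt), cos(2πnt))) = (k₁ − h₂)/(4πn); B((−cos(2πnt), sin(2πnt))) = (k₁ − h₂)/(4πn); and B((−sin(2πnt), cos(2πnt))) = (h₂ − k₁)/(4πn). In particular each of these diagonal elements equals ±(∇×α)/(4πn), where ∇×α = h₂ − k₁ is the scalar curl of the linear vector field α(x,y) = (h₁x + k₁y,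 h₂x + k₂y). -/
open MeasureTheory Real Matrix intervalIntegral

lemma vec_int (f g : ℝ → ℝ) (hf : Continuous f) (hg : Continuous g) (a b : ℝ) :
    (∫ s in a..b, ![f s, g s]) = ![∫ s in a..b, f s, ∫ s in a..b, g s] := by
  have hcont : Continuous (fun s => ![f s, g s]) := by
    apply continuous_pi; intro i; fin_cases i <;> simpa
  have hI : IntervalIntegrable (fun s => ![f s, g s]) volume a b :=
    hcont.intervalIntegrable a b
  funext i
  have := (ContinuousLinearMap.proj (R := ℝ)
    (φ := fun _ : Fin 2 => ℝ) i).intervalIntegral_comp_comm hI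
  fin_cases i <;> simp only [ContinuousLinearMap.proj_apply] at this <;>
    rw [← this] <;> simp

lemma inner_cos (c : ℝ) (hc : c ≠ 0) (t : ℝ) :
    (∫ s in (0:ℝ)..t, Real.cos (c * s)) = Real.sin (c * t) / c := by
  rw [intervalIntegral.integral_comp_mul_left Real.cos hc]
  simp [integral_cos]; ring

lemma inner_sin (c : ℝ) (hc : c ≠ 0) (t : ℝ) :
    (∫ s in (0:ℝ)..t, Real.sin (c * s)) = (1 - Real.cos (c * t)) / c := by
  rw [intervalIntegral.integral_comp_mul_left Real.sin hc]
  simp [integral_sin]; ring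

lemma master (c A Bc Cc Ds Es : ℝ) (hc : c ≠ 0) (hs : Real.sin c = 0)
    (hco : Real.cos c = 1) :
    (∫ t in (0:ℝ)..1, (A * (Real.sin (c*t) * Real.cos (c*t)) + Bc * Real.cos (c*t)
      + Cc * Real.cos (c*t)^2 + Ds * Real.sin (c*t)^2 + Es * Real.sin (c*t)))
      = Cc/2 + Ds/2 := by
  have i1 : (∫ t in (0:ℝ)..1, Real.sin (c*t) * Real.cos (c*t)) = 0 := by
    rw [intervalIntegral.integral_comp_mul_left (fun x => Real.sin x * Real.cos x) hc]
    simp [integral_sin_mul_cos₁, hs]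
  have i2 : (∫ t in (0:ℝ)..1, Real.cos (c*t)) = 0 := by
    rw [intervalIntegral.integral_comp_mul_left Real.cos hc]
    simp [integral_cos, hs]
  have i3 : (∫ t in (0:ℝ)..1, Real.cos (c*t)^2) = 1/2 := by
    rw [intervalIntegral.integral_comp_mul_left (fun x => Real.cos x ^ 2) hc]
    simp [integral_cos_sq, hs]; field_simp
  have i4 : (∫ t in (0:ℝ)..1, Real.sin (c*t)^2) = 1/2 := by
    rw [intervalIntegral.integral_comp_mul_left (fun x => Real.sin x ^ 2) hc]
    simp [integral_sin_sq, hs]; field_simp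
  have i5 : (∫ t in (0:ℝ)..1, Real.sin (c*t)) = 0 := by
    rw [intervalIntegral.integral_comp_mul_left Real.sin hc]
    simp [integral_sin, hco]
  have I : ∀ f : ℝ → ℝ, Continuous f → IntervalIntegrable f volume 0 1 :=
    fun f hf => hf.intervalIntegrable 0 1
  rw [intervalIntegral.integral_add, intervalIntegral.integral_add,
      intervalIntegral.integral_add, intervalIntegral.integral_add,
      intervalIntegral.integral_const_mul, intervalIntegral.integral_const_mul,
      intervalIntegral.integral_const_mul, intervalIntegral.integral_const_mul,
      intervalIntegral.integral_const_mul, i1, i2, i3, i4, i5]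
  · ring
  all_goals apply I; fun_prop

/-- With `M = !![h₁, k₁; h₂, k₂]` and
`B(φ) = ∫_0^1 φ(t) · (M ∫_0^t φ(s) ds) dt`, for every `n ≥ 1`:
`B((cos 2πnt, sin 2πnt)) = (h₂ − k₁)/(4πn)`, `B((sin 2πnt, cos 2πnt)) = (k₁ − h₂)/(4πn)`,
`B((−cos 2πnt, sin 2πnt)) = (k₁ − h₂)/(4πn)`, `B((−sin 2πnt, cos 2πnt)) = (h₂ − k₁)/(4πn)`;
each equals `±(∇×α)/(4πn)` where `∇×α = h₂ − k₁` is the scalar curl of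
`α(x,y) = (h₁x + k₁y, h₂x + k₂y)`. -/
theorem statement9 (h₁ k₁ h₂ k₂ : ℝ)
    (M : Matrix (Fin 2) (Fin 2) ℝ) (hM : M = !![h₁, k₁; h₂, k₂])
    (B : (ℝ → Fin 2 → ℝ) → ℝ)
    (hB : ∀ φ : ℝ → Fin 2 → ℝ,
      B φ = ∫ t in (0:ℝ)..1, φ t ⬝ᵥ M.mulVec (∫ s in (0:ℝ)..t, φ s)) :
    ∀ n : ℕ, 1 ≤ n →
      B (fun t => ![Real.cos (2 * π * (n : ℝ) * t), Real.sin (2 * π * (n : ℝ) * t)])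
          = (h₂ - k₁) / (4 * π * (n : ℝ)) ∧
      B (fun t => ![Real.sin (2 * π * (n : ℝ) * t), Real.cos (2 * π * (n : ℝ) * t)])
          = (k₁ - h₂) / (4 * π * (n : ℝ)) ∧
      B (fun t => ![-Real.cos (2 * π * (n : ℝ) * t), Real.sin (2 * π * (n : ℝ) * t)])
          = (k₁ - h₂) / (4 * π * (n : ℝ)) ∧
      B (fun t => ![-Real.sin (2 * π * (n : ℝ) * t), Real.cos (2 * π * (n : ℝ) * t)])
          = (h₂ - k₁) / (4 * π * (n : ℝ)) := by
  intro n hn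
  have hn0 : (n : ℝ) ≠ 0 := Nat.cast_ne_zero.mpr (by omega)
  set c : ℝ := 2 * π * (n : ℝ) with hcdef
  have hc : c ≠ 0 := by
    simp [hcdef, Real.pi_ne_zero, hn0]
  have hs : Real.sin c = 0 := by
    rw [show c = 0 + (n : ℝ) * (2 * π) by rw [hcdef]; ring,
      Real.sin_add_nat_mul_two_pi, Real.sin_zero]
  have hco : Real.cos c = 1 := by
    rw [show c = (n : ℝ) * (2 * π) by rw [hcdef]; ring]
    exact Real.cos_nat_mul_two_pi n
  refine ⟨?_, ?_, ?_, ?_⟩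
  · rw [hB, hM]
    rw [show (∫ t in (0:ℝ)..1,
        (fun t => ![Real.cos (c*t), Real.sin (c*t)]) t ⬝ᵥ
          (!![h₁, k₁; h₂, k₂]).mulVec (∫ s in (0:ℝ)..t,
            (fun t => ![Real.cos (c*t), Real.sin (c*t)]) s))
      = ∫ t in (0:ℝ)..1, (((h₁-k₂)/c) * (Real.sin (c*t) * Real.cos (c*t))
          + (k₁/c) * Real.cos (c*t) + (-k₁/c) * Real.cos (c*t)^2
          + (h₂/c) * Real.sin (c*t)^2 + (k₂/c) * Real.sin (c*t)) from
      intervalIntegral.integral_congr (fun t _ => by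
        simp only
        rw [vec_int _ _ (by fun_prop) (by fun_prop), inner_cos c hc, inner_sin c hc]
        simp [Matrix.mulVec, dotProduct, Fin.sum_univ_two]
        field_simp; ring)]
    rw [master c _ _ _ _ _ hc hs hco, hcdef]
    field_simp; ring
  · rw [hB, hM]
    rw [show (∫ t in (0:ℝ)..1,
        (fun t => ![Real.sin (c*t), Real.cos (c*t)]) t ⬝ᵥ
          (!![h₁, k₁; h₂, k₂]).mulVec (∫ s in (0:ℝ)..t,
            (fun t => ![Real.sin (c*t), Real.cos (c*t)]) s))
      = ∫ t in (0:ℝ)..1, (((k₂-h₁)/c) * (Real.sin (c*t) * Real.cos (c*t))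
          + (h₂/c) * Real.cos (c*t) + (-h₂/c) * Real.cos (c*t)^2
          + (k₁/c) * Real.sin (c*t)^2 + (h₁/c) * Real.sin (c*t)) from
      intervalIntegral.integral_congr (fun t _ => by
        simp only
        rw [vec_int _ _ (by fun_prop) (by fun_prop),  inner_cos c hc, inner_sin c hc]
        simp [Matrix.mulVec, dotProduct, Fin.sum_univ_two]
        field_simp; ring)]
    rw [master c _ _ _ _ _ hc hs hco, hcdef]
    field_simp; ring
  · rw [hB, hM]
    rw [show (∫ t in (0:ℝ)..1,
        (fun t => ![-Real.cos (c*t), Real.sin (c*t)]) t ⬝ᵥ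
          (!![h₁, k₁; h₂, k₂]).mulVec (∫ s in (0:ℝ)..t,
            (fun t => ![-Real.cos (c*t), Real.sin (c*t)]) s))
      = ∫ t in (0:ℝ)..1, (((h₁-k₂)/c) * (Real.sin (c*t) * Real.cos (c*t))
          + (-k₁/c) * Real.cos (c*t) + (k₁/c) * Real.cos (c*t)^2
          + (-h₂/c) * Real.sin (c*t)^2 + (k₂/c) * Real.sin (c*t)) from
      intervalIntegral.integral_congr (fun t _ => by
        simp only
        rw [vec_int _ _ (by fun_prop) (by fun_prop), intervalIntegral.integral_neg, inner_cos c hc, inner_sin c hc]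
        simp [Matrix.mulVec, dotProduct, Fin.sum_univ_two]
        field_simp; ring)]
    rw [master c _ _ _ _ _ hc hs hco, hcdef]
    field_simp; ring
  · rw [hB, hM]
    rw [show (∫ t in (0:ℝ)..1,
        (fun t => ![-Real.sin (c*t), Real.cos (c*t)]) t ⬝ᵥ
          (!![h₁, k₁; h₂, k₂]).mulVec (∫ s in (0:ℝ)..t,
            (fun t => ![-Real.sin (c*t), Real.cos (c*t)]) s))
      = ∫ t in (0:ℝ)..1, (((k₂-h₁)/c) * (Real.sin (c*t) * Real.cos (c*t))
          + (-h₂/c) * Real.cos (c*t) + (h₂/c) * Real.cos (c*t)^2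
          + (-k₁/c) * Real.sin (c*t)^2 + (h₁/c) * Real.sin (c*t)) from
      intervalIntegral.integral_congr (fun t _ => by
        simp only
        rw [vec_int _ _ (by fun_prop) (by fun_prop), intervalIntegral.integral_neg, inner_cos c hc, inner_sin c hc]
        simp [Matrix.mulVec, dotProduct, Fin.sum_univ_two]
        field_simp; ring)]
    rw [master c _ _ _ _ _ hc hs hco, hcdef]
    field_simp; ring
end

section
/- Let h₁, k₁, h₂, k₂ ∈ ℝ and let M be the 2×2 real matrix with rows (h₁, k₁) and (h₂, k₂). For φ ∈ L²([0,1]; ℝ²) define B(φ) = ∫_0^1 φ(t) · (M ∫_0^t φ(s) ds) dt. For n ≥ 1 and i = 0, …, n−1 let z_{n,i} : [0,1] → ℝ be given by z_{n,i}(t) = √n (t − i/n) for t ∈ [i/n, (i+1)/n], z_{n,i}(t) = 1/√n for t ∈ [(i+1)/n, 1], and z_{n,i}(t) = 0 for t ∈ [0, i/n], so that its derivative is ż_{n,i} = √n · 𝟙_{[i/n,(i+1)/n]}. Then: (i) ∫_0^1 ż_{n,i}(t) z_{n,i}(t) dt = 1/(2n); (ii) B((ż_{n,i}, 0)) = h₁/(2n)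 and B((0, ż_{n,i})) = k₂/(2n); and (iii) Σ_{i=0}^{n−1} [B((ż_{n,i}, 0)) + B((0, ż_{n,i}))] = (h₁ + k₂)/2 for every n ≥ 1, i.e. the renormalization term associated with the piecewise linear projections equals one half of the divergence ∇·α of the linear vector field α(x,y) = (h₁x + k₁y, h₂x + k₂y), for every n. -/
/-!
`ż_{n,i}` is `√n` on `[i/n, (i+1)/n]` and vanishes elsewhere, so in the pairing `∫ ż_{n,i} f` only
the values of `f` on that interval matter; there both `z_{n,i}` and the primitive `∫_0^t ż_{n,i}`
equal `√n (t - i/n)`, and the pairing is `√n · √n · (1/n)² / 2 = 1/(2n)`. For `φ = f • v` the form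
`B` factors as `(v ⬝ᵥ M v) ∫ f(t) ∫_0^t f`, so the two coordinate directions pick out the diagonal
entries `h₁` and `k₂` of `M`, and summing over the `n` basis paths gives `(h₁ + k₂)/2`.
-/

open MeasureTheory Real Matrix Set intervalIntegral

section IndicatorIntegrals

variable {E : Type*} [NormedAddCommGroup E] [NormedSpace ℝ E] {u v a b : ℝ}

theorem intervalIntegral.integral_indicator_Icc (huv : u ≤ v) (g : ℝ → E) :
    ∫ s in u..v, (Icc a b).indicator g s = ∫ s in Icc (max u a) (min v b), g s := by
  rw [integral_of_le huv, ← integral_Icc_eq_integral_Ioc, setIntegral_indicator measurableSet_Icc,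
    Icc_inter_Icc]

theorem intervalIntegral.integral_indicator_Icc_of_subset (hua : u ≤ a) (hab : a ≤ b)
    (hbv : b ≤ v) (g : ℝ → E) :
    ∫ s in u..v, (Icc a b).indicator g s = ∫ s in a..b, g s := by
  rw [integral_indicator_Icc ((hua.trans hab).trans hbv), max_eq_right hua, min_eq_right hbv,
    integral_Icc_eq_integral_Ioc, integral_of_le hab]

theorem intervalIntegral.integral_indicator_Icc_const_of_mem [CompleteSpace E] (hua : u ≤ a)
    (hv : v ∈ Icc a b) (c : E) : ∫ s in u..v, (Icc a b).indicator (fun _ => c) s = (v - a) • c := by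
  rw [integral_indicator_Icc (hua.trans hv.1), max_eq_right hua, min_eq_left hv.2,
    setIntegral_const, Real.volume_real_Icc_of_le hv.1]

end IndicatorIntegrals

theorem intervalIntegral.integral_indicator_const_mul_of_eqOn {u a b w c : ℝ} (hua : u ≤ a)
    (hab : a ≤ b) (hbw : b ≤ w) {f : ℝ → ℝ} (hf : EqOn f (fun t => c * (t - a)) (Icc a b)) :
    ∫ t in u..w, (Icc a b).indicator (fun _ => c) t * f t = c ^ 2 * (b - a) ^ 2 / 2 := by
  simp_rw [← indicator_mul_left]
  rw [integral_indicator_Icc_of_subset hua hab hbw,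
    integral_congr fun t ht => congrArg (c * ·) (hf (uIcc_of_le hab ▸ ht))]
  simp only [integral_const_mul, intervalIntegrable_id, intervalIntegrable_const, integral_sub,
    integral_id, integral_const, smul_eq_mul]
  ring

theorem intervalIntegral.integral_smul_dotProduct_mulVec_integral {m : Type*} [Fintype m]
    (M : Matrix m m ℝ) (v : m → ℝ) (f : ℝ → ℝ) (u w : ℝ) :
    ∫ t in u..w, (f t • v) ⬝ᵥ M *ᵥ ∫ s in u..t, f s • v
      = (v ⬝ᵥ M *ᵥ v) * ∫ t in u..w, f t * ∫ s in u..t, f s := by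
  simp_rw [integral_smul_const, mulVec_smul, smul_dotProduct, dotProduct_smul, smul_eq_mul]
  rw [← integral_const_mul]
  congr 1 with t
  ring

/-- The paper's `ż_{n,i}`. -/
noncomputable def hatDeriv (n i : ℕ) : ℝ → ℝ :=
  (Icc ((i : ℝ) / n) ((i + 1) / n)).indicator fun _ => √n

section HatDeriv

variable {n i : ℕ}

theorem hatDeriv_apply (t : ℝ) :
    hatDeriv n i t = √n * (Icc ((i : ℝ) / n) ((i + 1) / n)).indicator (fun _ => (1 : ℝ)) t := by
  rw [hatDeriv, ← smul_eq_mul, ← indicator_const_smul_apply, smul_eq_mul, mul_one]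

theorem integral_hatDeriv_of_mem {t : ℝ} (ht : t ∈ Icc ((i : ℝ) / n) ((i + 1) / n)) :
    ∫ s in 0..t, hatDeriv n i s = √n * (t - i / n) := by
  rw [hatDeriv, integral_indicator_Icc_const_of_mem (by positivity) ht, smul_eq_mul, mul_comm]

theorem integral_hatDeriv_mul_of_eqOn (hi : i < n) {f : ℝ → ℝ}
    (hf : EqOn f (fun t => √n * (t - i / n)) (Icc ((i : ℝ) / n) ((i + 1) / n))) :
    ∫ t in 0..1, hatDeriv n i t * f t = 1 / (2 * n) := by
  have hn : (0 : ℝ) < n := by exact_mod_cast (Nat.zero_le i).trans_lt hi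
  have hi' : (i : ℝ) + 1 ≤ n := by exact_mod_cast hi
  rw [hatDeriv, integral_indicator_const_mul_of_eqOn (by positivity)
    (div_le_div_of_nonneg_right (by linarith) hn.le) ((div_le_one hn).2 hi') hf,
    sq_sqrt hn.le]
  field_simp
  ring

end HatDeriv

theorem statement11_general (h₁ k₁ h₂ k₂ : ℝ)
    (M : Matrix (Fin 2) (Fin 2) ℝ) (hM : M = !![h₁, k₁; h₂, k₂])
    (B : (ℝ → Fin 2 → ℝ) → ℝ)
    (hB : ∀ φ : ℝ → Fin 2 → ℝ,
      B φ = ∫ t in (0:ℝ)..1, φ t ⬝ᵥ M.mulVec (∫ s in (0:ℝ)..t, φ s))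
    (n : ℕ) (hn : 1 ≤ n)
    (z zdot : ℕ → ℝ → ℝ)
    (hz1 : ∀ i : ℕ, ∀ t ∈ Icc ((i : ℝ) / n) (((i : ℝ) + 1) / n),
      z i t = Real.sqrt n * (t - (i : ℝ) / n))
    (hzdot : ∀ i : ℕ, ∀ t : ℝ,
      zdot i t = Real.sqrt n * (Icc ((i : ℝ) / n) (((i : ℝ) + 1) / n)).indicator
        (fun _ => (1 : ℝ)) t) :
    (∀ i < n, ∫ t in (0:ℝ)..1, zdot i t * z i t = 1 / (2 * (n : ℝ))) ∧
    (∀ i < n, B (fun t => ![zdot i t, 0]) = h₁ / (2 * (n : ℝ)) ∧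
      B (fun t => ![0, zdot i t]) = k₂ / (2 * (n : ℝ))) ∧
    ∑ i ∈ Finset.range n, (B (fun t => ![zdot i t, 0]) + B (fun t => ![0, zdot i t]))
      = (h₁ + k₂) / 2 := by
  have hzdot_eq (i : ℕ) : zdot i = hatDeriv n i := funext fun t => by rw [hzdot, hatDeriv_apply]
  have hB_line (i : ℕ) (v : Fin 2 → ℝ) : B (fun t => zdot i t • v)
      = (v ⬝ᵥ M *ᵥ v) * ∫ t in 0..1, zdot i t * ∫ s in 0..t, zdot i s := by
    rw [hB, integral_smul_dotProduct_mulVec_integral]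
  have hB_basis : ∀ i < n, B (fun t => ![zdot i t, 0]) = h₁ / (2 * n) ∧
      B (fun t => ![0, zdot i t]) = k₂ / (2 * n) := by
    intro i hi
    have hpair : ∫ t in 0..1, zdot i t * ∫ s in 0..t, zdot i s = 1 / (2 * n) := by
      rw [hzdot_eq]
      exact integral_hatDeriv_mul_of_eqOn hi fun t ht => integral_hatDeriv_of_mem ht
    have hx : (fun t => ![zdot i t, 0]) = fun t => zdot i t • ![1, 0] := by simp
    have hy : (fun t => ![0, zdot i t]) = fun t => zdot i t • ![0, 1] := by simp
    have hM₁ : ![1, 0] ⬝ᵥ M *ᵥ ![1, 0] = h₁ := by simp [hM, vecHead, vecTail]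
    have hM₂ : ![0, 1] ⬝ᵥ M *ᵥ ![0, 1] = k₂ := by simp [hM, vecHead, vecTail]
    rw [hx, hy, hB_line, hB_line, hpair, hM₁, hM₂]
    constructor <;> ring
  refine ⟨fun i hi => ?_, hB_basis, ?_⟩
  · rw [hzdot_eq]
    exact integral_hatDeriv_mul_of_eqOn hi fun t ht => hz1 i t ht
  · have hn' : (n : ℝ) ≠ 0 := by exact_mod_cast (Nat.one_le_iff_ne_zero.1 hn)
    rw [Finset.sum_congr rfl fun i hi => by
      rw [(hB_basis i (Finset.mem_range.1 hi)).1, (hB_basis i (Finset.mem_range.1 hi)).2],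
      Finset.sum_const, Finset.card_range, nsmul_eq_mul]
    field_simp

/-- With `M = !![h₁, k₁; h₂, k₂]` and
`B(φ) = ∫_0^1 φ(t) · (M ∫_0^t φ(s) ds) dt`, let `z_{n,i}` (for `0 ≤ i < n`) be the piecewise
linear functions `z_{n,i}(t) = √n (t − i/n)` on `[i/n, (i+1)/n]`, `1/√n` on `[(i+1)/n, 1]`,
`0` on `[0, i/n]`, with derivative `ż_{n,i} = √n · 𝟙_{[i/n,(i+1)/n]}`. Then
(i) `∫_0^1 ż_{n,i} z_{n,i} = 1/(2n)`; (ii) `B((ż_{n,i}, 0)) = h₁/(2n)` and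
`B((0, ż_{n,i})) = k₂/(2n)`; (iii) `Σ_{i<n} [B((ż_{n,i},0)) + B((0,ż_{n,i}))] = (h₁ + k₂)/2`
for every `n ≥ 1`: the renormalization term of the piecewise linear projections is one half of
the divergence of `α(x,y) = (h₁x + k₁y, h₂x + k₂y)`. -/
theorem statement11 (h₁ k₁ h₂ k₂ : ℝ)
    (M : Matrix (Fin 2) (Fin 2) ℝ) (hM : M = !![h₁, k₁; h₂, k₂])
    (B : (ℝ → Fin 2 → ℝ) → ℝ)
    (hB : ∀ φ : ℝ → Fin 2 → ℝ,
      B φ = ∫ t in (0:ℝ)..1, φ t ⬝ᵥ M.mulVec (∫ s in (0:ℝ)..t, φ s))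
    (n : ℕ) (hn : 1 ≤ n)
    (z zdot : ℕ → ℝ → ℝ)
    (hz1 : ∀ i : ℕ, ∀ t ∈ Icc ((i : ℝ) / n) (((i : ℝ) + 1) / n),
      z i t = Real.sqrt n * (t - (i : ℝ) / n))
    (hz2 : ∀ i : ℕ, ∀ t ∈ Icc (((i : ℝ) + 1) / n) (1 : ℝ), z i t = 1 / Real.sqrt n)
    (hz3 : ∀ i : ℕ, ∀ t ∈ Icc (0 : ℝ) ((i : ℝ) / n), z i t = 0)
    (hzdot : ∀ i : ℕ, ∀ t : ℝ,
      zdot i t = Real.sqrt n * (Icc ((i : ℝ) / n) (((i : ℝ) + 1) / n)).indicator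
        (fun _ => (1 : ℝ)) t) :
    (∀ i < n, ∫ t in (0:ℝ)..1, zdot i t * z i t = 1 / (2 * (n : ℝ))) ∧
    (∀ i < n, B (fun t => ![zdot i t, 0]) = h₁ / (2 * (n : ℝ)) ∧
      B (fun t => ![0, zdot i t]) = k₂ / (2 * (n : ℝ))) ∧
    ∑ i ∈ Finset.range n, (B (fun t => ![zdot i t, 0]) + B (fun t => ![0, zdot i t]))
      = (h₁ + k₂) / 2 :=
  statement11_general h₁ k₁ h₂ k₂ M hM B hB n hn z zdot hz1 hzdot
end
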